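/- Let k ≥ 2 be an integer and let D be a k-quasi-transitive digraph. If S_1 and S_2 are distinct strong components of D such that some vertex of S_1 reaches some vertex of S_2 by a directed path, then d(u,v) ≤ k−1 for every vertex u of S_1 and every vertex v of S_2. -/

import Mathlib

/-! Take a shortest path `u = x₀ → ⋯ → xₙ = v` and suppose `n ≥ k`. Each subpath `xᵢ → ⋯ → xᵢ₊ₖ`
has length `k`, so `xᵢ` and `xᵢ₊ₖ` are adjacent; a forward arc would shorten the path, hence
`xᵢ₊ₖ → xᵢ`. Jumping back by `k` from `v` and walking forward to `x_k → x₀` shows that `v` reaches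
`u`, which is impossible for vertices of two distinct strong components. -/

variable {V : Type*}

/-- A directed path of length `n` from `u` to `v` in the digraph with arc relation `A`:
a sequence of `n + 1` pairwise distinct vertices, consecutive ones joined by arcs. -/
def HasPathN (A : V → V → Prop) (u v : V) (n : ℕ) : Prop :=
  ∃ f : Fin (n + 1) → V, Function.Injective f ∧ f 0 = u ∧ f (Fin.last n) = v ∧
    ∀ i : Fin n, A (f i.castSucc) (f i.succ)

/-- The distance from `u` to `v`: the length of a shortest directed path from `u` to `v`,
`⊤` if there is no such path. -/
noncomputable def ddist (A : V → V → Prop) (u v : V) : ℕ∞ :=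
  sInf {n : ℕ∞ | ∃ m : ℕ, n = (m : ℕ∞) ∧ HasPathN A u v m}

/-- `D` is `k`-quasi-transitive if for every directed path `(v_0, …, v_k)` of length `k`,
either `(v_0, v_k)` or `(v_k, v_0)` is an arc. -/
def KQuasiTrans (A : V → V → Prop) (k : ℕ) : Prop :=
  ∀ u v : V, HasPathN A u v k → A u v ∨ A v u

/-- A vertex `v` is an `r`-king if every vertex is within distance `r` from `v`. -/
def IsRKing (A : V → V → Prop) (r : ℕ) (v : V) : Prop :=
  ∀ u : V, ddist A v u ≤ (r : ℕ∞)

/-- `u` reaches `v` by a directed path. -/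
def Reaches (A : V → V → Prop) (u v : V) : Prop :=
  ∃ n : ℕ, HasPathN A u v n

/-- A strong component: the set of all vertices mutually reachable with some vertex. -/
def IsStrongComponent (A : V → V → Prop) (S : Set V) : Prop :=
  ∃ v : V, S = {u | Reaches A u v ∧ Reaches A v u}

/-- An initial strong component: a strong component receiving no arcs from outside. -/
def IsInitialStrongComponent (A : V → V → Prop) (S : Set V) : Prop :=
  IsStrongComponent A S ∧ ∀ u v : V, u ∉ S → v ∈ S → ¬ A u v

/-- The out-degree of `v` in `D`. -/
noncomputable def outDeg (A : V → V → Prop) (v : V) : ℕ :=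
  {u : V | A v u}.ncard

/-- The out-degree of `v` in the subdigraph of `D` induced by `C`. -/
noncomputable def outDegIn (A : V → V → Prop) (C : Set V) (v : V) : ℕ :=
  {u ∈ C | A v u}.ncard

/-- The maximum out-degree of the subdigraph induced by `C`. -/
noncomputable def maxOutDegIn (A : V → V → Prop) (C : Set V) : ℕ :=
  sSup (outDegIn A C '' C)



section

variable {A : V → V → Prop}

/-- Walks are `ℕ`-indexed sequences of which only the values at `0, …, n` matter. -/
def IsWalk (A : V → V → Prop) (f : ℕ → V) (n : ℕ) : Prop :=
  ∀ i < n, A (f i) (f (i + 1))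

def HasWalk (A : V → V → Prop) (u v : V) (n : ℕ) : Prop :=
  ∃ f : ℕ → V, f 0 = u ∧ f n = v ∧ IsWalk A f n

lemma hasWalk_zero (u : V) : HasWalk A u u 0 :=
  ⟨fun _ => u, rfl, rfl, fun _ h => absurd h (Nat.not_lt_zero _)⟩

lemma HasWalk.append {u w v : V} {m n : ℕ} (h₁ : HasWalk A u w m) (h₂ : HasWalk A w v n) :
    HasWalk A u v (m + n) := by
  obtain ⟨f, rfl, rfl, hf⟩ := h₁
  obtain ⟨g, hg0, rfl, hg⟩ := h₂
  set fg : ℕ → V := fun i => if i ≤ m then f i else g (i - m)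
  have fg_of_le {i : ℕ} (hi : m ≤ i) : fg i = g (i - m) := by
    by_cases him : i ≤ m
    · obtain rfl : i = m := by omega
      simp [fg, hg0]
    · simp only [fg, if_neg him]
  refine ⟨fg, by simp [fg], by rw [fg_of_le (by omega), Nat.add_sub_cancel_left], fun i hi => ?_⟩
  rcases lt_or_ge i m with him | him
  · simpa only [fg, if_pos him.le, if_pos (Nat.succ_le_of_lt him)] using hf i him
  · rw [fg_of_le him, fg_of_le (by omega), show i + 1 - m = i - m + 1 by omega]
    exact hg (i - m) (by omega)

lemma HasWalk.tail {u w v : V} {n : ℕ} (h : HasWalk A u w n) (hwv : A w v) :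
    HasWalk A u v (n + 1) :=
  h.append ⟨fun i => if i = 0 then w else v, rfl, rfl, fun i hi => by simp_all⟩

lemma IsWalk.segment {f : ℕ → V} {n i j : ℕ} (hf : IsWalk A f n) (hij : i ≤ j) (hjn : j ≤ n) :
    HasWalk A (f i) (f j) (j - i) :=
  ⟨fun m => f (i + m), rfl, by simp only [Nat.add_sub_cancel' hij],
    fun m hm => hf (i + m) (by omega)⟩

lemma HasWalk.reflTransGen {u v : V} {n : ℕ} (h : HasWalk A u v n) :
    Relation.ReflTransGen A u v := by
  obtain ⟨f, rfl, rfl, hf⟩ := h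
  induction n with
  | zero => rfl
  | succ n ih => exact (ih fun i hi => hf i (by omega)).tail (hf n n.lt_succ_self)

lemma exists_hasWalk_of_reflTransGen {u v : V} (h : Relation.ReflTransGen A u v) :
    ∃ n, HasWalk A u v n := by
  induction h with
  | refl => exact ⟨0, hasWalk_zero u⟩
  | tail _ hwv ih => exact ih.elim fun n hn => ⟨n + 1, hn.tail hwv⟩

lemma HasPathN.hasWalk {u v : V} {n : ℕ} (h : HasPathN A u v n) : HasWalk A u v n := by
  obtain ⟨f, -, rfl, rfl, hf⟩ := h
  refine ⟨fun i => f ⟨min i n, by omega⟩, by simp, by simp [Fin.last], fun i hi => ?_⟩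
  convert hf ⟨i, hi⟩ using 2 <;> ext <;> simp <;> omega

lemma IsWalk.hasPathN {f : ℕ → V} {n : ℕ} (hf : IsWalk A f n)
    (hinj : Set.InjOn f (Set.Iic n)) : HasPathN A (f 0) (f n) n :=
  ⟨fun i => f i, fun i j h => Fin.ext (hinj (Set.mem_Iic.2 i.is_le) (Set.mem_Iic.2 j.is_le) h),
    rfl, rfl, fun i => hf i i.isLt⟩

lemma IsWalk.injOn_of_minimal {f : ℕ → V} {n : ℕ} (hf : IsWalk A f n)
    (hmin : ∀ m < n, ¬ HasWalk A (f 0) (f n) m) : Set.InjOn f (Set.Iic n) := by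
  intro i hi j hj hij
  by_contra hne
  wlog hlt : i < j generalizing i j
  · exact this hj hi hij.symm (Ne.symm hne) (by omega)
  simp only [Set.mem_Iic] at hi hj
  have hprefix := hf.segment (Nat.zero_le i) hi
  rw [hij] at hprefix
  exact hmin _ (by omega) (hprefix.append (hf.segment hj le_rfl))

lemma exists_minimal_walk {u v : V} (h : Relation.ReflTransGen A u v) :
    ∃ (f : ℕ → V) (n : ℕ), f 0 = u ∧ f n = v ∧ IsWalk A f n ∧ ∀ m < n, ¬ HasWalk A u v m := by
  classical
  have hex := exists_hasWalk_of_reflTransGen h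
  obtain ⟨f, hf0, hfn, hf⟩ := Nat.find_spec hex
  exact ⟨f, _, hf0, hfn, hf, fun m hm => Nat.find_min hex hm⟩

lemma reaches_iff_reflTransGen {u v : V} : Reaches A u v ↔ Relation.ReflTransGen A u v := by
  refine ⟨fun ⟨_, h⟩ => h.hasWalk.reflTransGen, fun h => ?_⟩
  obtain ⟨f, n, rfl, rfl, hf, hmin⟩ := exists_minimal_walk h
  exact ⟨n, hf.hasPathN (hf.injOn_of_minimal hmin)⟩

lemma ddist_le_of_hasPathN {u v : V} {n : ℕ} (h : HasPathN A u v n) : ddist A u v ≤ n :=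
  sInf_le ⟨n, rfl, h⟩

lemma IsStrongComponent.mem_iff {S : Set V} (hS : IsStrongComponent A S) {u v : V}
    (hu : u ∈ S) :
    v ∈ S ↔ Relation.ReflTransGen A u v ∧ Relation.ReflTransGen A v u := by
  obtain ⟨p, rfl⟩ := hS
  simp only [Set.mem_ofPred_eq, reaches_iff_reflTransGen] at hu ⊢
  exact ⟨fun hv => ⟨hu.1.trans hv.2, hv.1.trans hu.2⟩,
    fun hv => ⟨hv.2.trans hu.1, hu.2.trans hv.1⟩⟩

lemma IsStrongComponent.eq_of_reflTransGen {S₁ S₂ : Set V} (h₁ : IsStrongComponent A S₁)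
    (h₂ : IsStrongComponent A S₂) {u v : V} (hu : u ∈ S₁) (hv : v ∈ S₂)
    (huv : Relation.ReflTransGen A u v) (hvu : Relation.ReflTransGen A v u) : S₁ = S₂ := by
  ext w
  rw [h₁.mem_iff hu, h₂.mem_iff hv]
  exact ⟨fun hw => ⟨hvu.trans hw.1, hw.2.trans huv⟩, fun hw => ⟨huv.trans hw.1, hw.2.trans hvu⟩⟩

/-- A forward arc `f i → f (i + k)` would be a shortcut. -/
lemma KQuasiTrans.backward_arc_of_minimal {k : ℕ} (hqt : KQuasiTrans A k) (hk : 2 ≤ k)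
    {f : ℕ → V} {n : ℕ} (hf : IsWalk A f n) (hmin : ∀ m < n, ¬ HasWalk A (f 0) (f n) m)
    {i : ℕ} (hi : i + k ≤ n) : A (f (i + k)) (f i) := by
  have hinj := hf.injOn_of_minimal hmin
  have hpath : HasPathN A (f i) (f (i + k)) k := by
    simpa using IsWalk.hasPathN (f := fun m => f (i + m)) (fun m hm => hf (i + m) (by omega))
      (fun a ha b hb hab => by
        simp only [Set.mem_Iic] at ha hb
        have := hinj (Set.mem_Iic.2 (by omega : i + a ≤ n)) (Set.mem_Iic.2 (by omega)) hab
        omega)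
  refine (hqt _ _ hpath).resolve_left fun hfwd => hmin (i + 1 + (n - (i + k))) (by omega) ?_
  exact ((hf.segment (Nat.zero_le i) (by omega)).tail hfwd).append (hf.segment (by omega) le_rfl)

/-- Jump back `k` steps at a time until reaching one of `f 1, …, f k`, walk forward to `f k`, and
close with the arc `f k → f 0`. -/
lemma KQuasiTrans.reflTransGen_of_minimal {k : ℕ} (hqt : KQuasiTrans A k) (hk : 2 ≤ k)
    {f : ℕ → V} {n : ℕ} (hf : IsWalk A f n) (hmin : ∀ m < n, ¬ HasWalk A (f 0) (f n) m)
    (hkn : k ≤ n) : Relation.ReflTransGen A (f n) (f 0) := by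
  have hback0 : A (f k) (f 0) := by
    simpa using hqt.backward_arc_of_minimal hk hf hmin (i := 0) (by omega)
  suffices ∀ i, 1 ≤ i → i ≤ n → Relation.ReflTransGen A (f i) (f 0) from this n (by omega) le_rfl
  intro i
  induction i using Nat.strong_induction_on with
  | _ i ih =>
    intro hi hin
    rcases le_or_gt i k with hik | hik
    · exact ((hf.segment hik hkn).reflTransGen).tail hback0
    · have hback := hqt.backward_arc_of_minimal hk hf hmin (i := i - k) (by omega)
      rw [Nat.sub_add_cancel hik.le] at hback
      exact .head hback (ih (i - k) (by omega) (by omega) (by omega))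

lemma KQuasiTrans.ddist_le_of_not_reflTransGen {k : ℕ} (hqt : KQuasiTrans A k) (hk : 2 ≤ k)
    {u v : V} (huv : Relation.ReflTransGen A u v) (hvu : ¬ Relation.ReflTransGen A v u) :
    ddist A u v ≤ ((k - 1 : ℕ) : ℕ∞) := by
  obtain ⟨f, n, rfl, rfl, hf, hmin⟩ := exists_minimal_walk huv
  have hnk : n < k := by
    by_contra! hkn
    exact hvu (hqt.reflTransGen_of_minimal hk hf hmin hkn)
  exact (ddist_le_of_hasPathN (hf.hasPathN (hf.injOn_of_minimal hmin))).trans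
    (by exact_mod_cast (by omega : n ≤ k - 1))

end

theorem kqt_component_distance_general
    (A : V → V → Prop)
    (k : ℕ) (hk : 2 ≤ k) (hqt : KQuasiTrans A k)
    (S₁ S₂ : Set V) (h₁ : IsStrongComponent A S₁) (h₂ : IsStrongComponent A S₂)
    (hne : S₁ ≠ S₂) (hreach : ∃ u ∈ S₁, ∃ v ∈ S₂, Reaches A u v) :
    ∀ u ∈ S₁, ∀ v ∈ S₂, ddist A u v ≤ ((k - 1 : ℕ) : ℕ∞) := by
  intro u hu v hv
  obtain ⟨u₀, hu₀, v₀, hv₀, hr⟩ := hreach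
  have huv : Relation.ReflTransGen A u v :=
    (((h₁.mem_iff hu).1 hu₀).1.trans (reaches_iff_reflTransGen.1 hr)).trans
      ((h₂.mem_iff hv₀).1 hv).1
  exact hqt.ddist_le_of_not_reflTransGen hk huv fun hvu =>
    hne (h₁.eq_of_reflTransGen h₂ hu hv huv hvu)

/-- `k ≥ 2`; if `S₁` and `S₂` are distinct strong components and some vertex
of `S₁` reaches some vertex of `S₂`, then `d(u,v) ≤ k−1` for all `u ∈ S₁`, `v ∈ S₂`. -/
theorem kqt_component_distance
    [Fintype V] (A : V → V → Prop) (hloop : ∀ v : V, ¬ A v v)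
    (k : ℕ) (hk : 2 ≤ k) (hqt : KQuasiTrans A k)
    (S₁ S₂ : Set V) (h₁ : IsStrongComponent A S₁) (h₂ : IsStrongComponent A S₂)
    (hne : S₁ ≠ S₂) (hreach : ∃ u ∈ S₁, ∃ v ∈ S₂, Reaches A u v) :
    ∀ u ∈ S₁, ∀ v ∈ S₂, ddist A u v ≤ ((k - 1 : ℕ) : ℕ∞) :=
  kqt_component_distance_general A k hk hqt S₁ S₂ h₁ h₂ hne hreach
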